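/- For a complex eigenvalue pair λ, λ* of C with Jordan real-form block J = [[Re λ, −Im λ],[Im λ, Re λ]], the characteristic function of the 4-dimensional subsystem factors as det(sI₄ − I₂⊗A₀ − J⊗B_P e^{−τ₁s} − J⊗B_D e^{−τ₂s}) = s⁴ + 2Ds³ + (D²+2P)s² + 2DPs + P² − 2Re(λ)(s²+Ds+P)(Ds e^{−τ₂s}+P e^{−τ₁s}) + |λ|²(Ds e^{−τ₂s}+P e^{−τ₁s})². -/

import Mathlib

/-!
With `B = e^{-τ₁s} B_P + e^{-τ₂s} B_D`, the matrix is `I₂ ⊗ (sI - A₀) - J ⊗ B`. Over ℂ,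
`J = V diag(λ, λ̄) V⁻¹`, and conjugating by `V ⊗ I₂` makes the matrix block diagonal with blocks
`sI - A₀ - μB`, `μ ∈ {λ, λ̄}`. Each block has determinant `q - μh` with `q = s² + Ds + P`, and
`(q - λh)(q - λ̄h)` expands to the claim because `λ + λ̄ = 2 Re λ` and `λλ̄ = |λ|²`.
-/

open Kronecker Matrix

section

variable {R m n : Type*} [CommRing R] [Fintype m] [DecidableEq m] [Fintype n] [DecidableEq n]

theorem det_one_kronecker_sub_diagonal_kronecker (X B : Matrix n n R) (d : m → R) :
    det (1 ⊗ₖ X - diagonal d ⊗ₖ B) = ∏ i, det (X - d i • B) := by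
  have hblock : 1 ⊗ₖ X - diagonal d ⊗ₖ B =
      reindex (Equiv.prodComm n m) (Equiv.prodComm n m) (blockDiagonal fun i => X - d i • B) := by
    ext ⟨i, k⟩ ⟨j, l⟩
    by_cases hij : i = j
    · subst hij; simp
    · simp [hij, blockDiagonal_apply_ne _ _ _ hij]
  rw [hblock, det_reindex_self, det_blockDiagonal]

theorem det_one_kronecker_sub_kronecker_of_eq_mul_diagonal_mul {J V W : Matrix m m R} {d : m → R}
    (hJ : J = V * diagonal d * W) (hWV : W * V = 1) (X B : Matrix n n R) :
    det (1 ⊗ₖ X - J ⊗ₖ B) = ∏ i, det (X - d i • B) := by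
  subst hJ
  have hconj : 1 ⊗ₖ X - (V * diagonal d * W) ⊗ₖ B =
      (V ⊗ₖ 1) * (1 ⊗ₖ X - diagonal d ⊗ₖ B) * (W ⊗ₖ 1) := by
    rw [Matrix.mul_sub, Matrix.sub_mul, ← mul_kronecker_mul, ← mul_kronecker_mul,
      ← mul_kronecker_mul, ← mul_kronecker_mul, Matrix.mul_one, mul_eq_one_comm.mp hWV]
    simp
  rw [hconj, det_mul_comm, ← Matrix.mul_assoc, ← mul_kronecker_mul, hWV, Matrix.mul_one,
    one_kronecker_one, Matrix.one_mul, det_one_kronecker_sub_diagonal_kronecker]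

end

theorem realJordanBlock_eq_mul_diagonal_mul (z : ℂ) :
    !![(z.re : ℂ), -(z.im : ℂ); (z.im : ℂ), (z.re : ℂ)] =
      !![1, 1; -Complex.I, Complex.I] * diagonal ![z, (starRingEnd ℂ) z] *
        ((2 : ℂ)⁻¹ • !![1, Complex.I; 1, -Complex.I]) := by
  rw [diagonal_fin_two]
  ext i j
  fin_cases i <;> fin_cases j <;> simp <;> apply Complex.ext <;> simp <;> ring

theorem realJordanBlock_eigenbasis_leftInverse :
    (2 : ℂ)⁻¹ • !![1, Complex.I; 1, -Complex.I] * !![1, 1; -Complex.I, Complex.I] = 1 := by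
  ext i j
  fin_cases i <;> fin_cases j <;> simp <;> ring_nf <;> simp [Complex.I_sq] <;> norm_num

theorem stmt_6_general (P D : ℝ) (lam : ℂ) (τ₁ τ₂ : ℝ) (s : ℂ) :
    let A₀ : Matrix (Fin 2) (Fin 2) ℂ := !![0, 1; -(P : ℂ), -(D : ℂ)]
    let BP : Matrix (Fin 2) (Fin 2) ℂ := !![0, 0; (P : ℂ), 0]
    let BD : Matrix (Fin 2) (Fin 2) ℂ := !![0, 0; 0, (D : ℂ)]
    let J : Matrix (Fin 2) (Fin 2) ℂ :=
      !![(lam.re : ℂ), -(lam.im : ℂ); (lam.im : ℂ), (lam.re : ℂ)]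
    let h : ℂ := (D : ℂ) * s * Complex.exp (-(τ₂ : ℂ) * s)
      + (P : ℂ) * Complex.exp (-(τ₁ : ℂ) * s)
    Matrix.det (s • (1 : Matrix (Fin 2 × Fin 2) (Fin 2 × Fin 2) ℂ)
        - (1 : Matrix (Fin 2) (Fin 2) ℂ) ⊗ₖ A₀
        - Complex.exp (-(τ₁ : ℂ) * s) • (J ⊗ₖ BP)
        - Complex.exp (-(τ₂ : ℂ) * s) • (J ⊗ₖ BD))
      = s ^ 4 + 2 * (D : ℂ) * s ^ 3 + ((D : ℂ) ^ 2 + 2 * (P : ℂ)) * s ^ 2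
        + 2 * (D : ℂ) * (P : ℂ) * s + (P : ℂ) ^ 2
        - 2 * (lam.re : ℂ) * (s ^ 2 + (D : ℂ) * s + (P : ℂ)) * h
        + ((‖lam‖ : ℝ) : ℂ) ^ 2 * h ^ 2 := by
  intro A₀ BP BD J h
  let B := Complex.exp (-(τ₁ : ℂ) * s) • BP + Complex.exp (-(τ₂ : ℂ) * s) • BD
  have hsplit : s • (1 : Matrix (Fin 2 × Fin 2) (Fin 2 × Fin 2) ℂ) - 1 ⊗ₖ A₀
      - Complex.exp (-(τ₁ : ℂ) * s) • (J ⊗ₖ BP) - Complex.exp (-(τ₂ : ℂ) * s) • (J ⊗ₖ BD)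
        = 1 ⊗ₖ (s • 1 - A₀) - J ⊗ₖ B := by
    ext ⟨i, k⟩ ⟨j, l⟩
    simp only [Matrix.sub_apply, Matrix.smul_apply, Matrix.add_apply, kroneckerMap_apply, one_apply,
      Prod.ext_iff, smul_eq_mul, B]
    split_ifs <;> simp_all <;> ring
  have hblock (μ : ℂ) : det (s • 1 - A₀ - μ • B) = s ^ 2 + D * s + P - μ * h := by
    simp only [det_fin_two, Matrix.sub_apply, Matrix.smul_apply, Matrix.add_apply, one_apply_eq,
      one_apply_ne zero_ne_one, one_apply_ne one_ne_zero, of_apply, cons_val', cons_val_zero,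
      cons_val_one, cons_val_fin_one, smul_eq_mul, A₀, B, BP, BD, h]
    ring
  have hre : lam + (starRingEnd ℂ) lam = 2 * (lam.re : ℂ) := by simp [Complex.add_conj]
  rw [hsplit, det_one_kronecker_sub_kronecker_of_eq_mul_diagonal_mul
    (realJordanBlock_eq_mul_diagonal_mul lam) realJordanBlock_eigenbasis_leftInverse,
    Fin.prod_univ_two]
  simp only [hblock, Matrix.cons_val_zero, Matrix.cons_val_one]
  linear_combination (-(s ^ 2 + D * s + P) * h) * hre + h ^ 2 * Complex.mul_conj' lam

/-- Characteristic function of the 4-dimensional subsystem associated with a complex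
eigenvalue pair of C, in terms of the Jordan real-form block J. -/
theorem stmt_6 (P D : ℝ) (lam : ℂ) (τ₁ τ₂ : ℝ) (hτ₁ : 0 ≤ τ₁) (hτ₂ : 0 ≤ τ₂) (s : ℂ) :
    let A₀ : Matrix (Fin 2) (Fin 2) ℂ := !![0, 1; -(P : ℂ), -(D : ℂ)]
    let BP : Matrix (Fin 2) (Fin 2) ℂ := !![0, 0; (P : ℂ), 0]
    let BD : Matrix (Fin 2) (Fin 2) ℂ := !![0, 0; 0, (D : ℂ)]
    let J : Matrix (Fin 2) (Fin 2) ℂ :=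
      !![(lam.re : ℂ), -(lam.im : ℂ); (lam.im : ℂ), (lam.re : ℂ)]
    let h : ℂ := (D : ℂ) * s * Complex.exp (-(τ₂ : ℂ) * s)
      + (P : ℂ) * Complex.exp (-(τ₁ : ℂ) * s)
    Matrix.det (s • (1 : Matrix (Fin 2 × Fin 2) (Fin 2 × Fin 2) ℂ)
        - (1 : Matrix (Fin 2) (Fin 2) ℂ) ⊗ₖ A₀
        - Complex.exp (-(τ₁ : ℂ) * s) • (J ⊗ₖ BP)
        - Complex.exp (-(τ₂ : ℂ) * s) • (J ⊗ₖ BD))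
      = s ^ 4 + 2 * (D : ℂ) * s ^ 3 + ((D : ℂ) ^ 2 + 2 * (P : ℂ)) * s ^ 2
        + 2 * (D : ℂ) * (P : ℂ) * s + (P : ℂ) ^ 2
        - 2 * (lam.re : ℂ) * (s ^ 2 + (D : ℂ) * s + (P : ℂ)) * h
        + ((‖lam‖ : ℝ) : ℂ) ^ 2 * h ^ 2 :=
  stmt_6_general P D lam τ₁ τ₂ s
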